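/- arXiv:2004.11531 — 5 statements merged into one kernel-verified Lean document; each statement's English description precedes it below -/
import Mathlib

section
/- Given positive reals δ, α, ψ_G, ψ_B, the values P_HG = ψ_B(δ+ψ_G α)/(2(δ(ψ_G+ψ_B)+α ψ_G ψ_B)), P_LG = ψ_B δ/(2(δ(ψ_G+ψ_B)+α ψ_G ψ_B)), P_HB = ψ_G δ/(2(δ(ψ_G+ψ_B)+α ψ_G ψ_B)), P_LB = ψ_G(δ+ψ_B α)/(2(δ(ψ_G+ψ_B)+α ψ_G ψ_B)) satisfy the steady-state system: P_HG·δ = P_LG·δ + P_HB·ψ_B·α, P_LG·(δ+ψ_G·α) = P_HG·δ, P_HB·(δ+ψ_B·α) = P_LB·δ, and P_LB·δ = P_HB·δ + P_LG·ψ_G·α. -/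
theorem steady_state_system (δ α ψG ψB : ℝ)
    (hδ : 0 < δ) (hα : 0 < α) (hG : 0 < ψG) (hB : 0 < ψB)
    (PHG PLG PHB PLB : ℝ)
    (hPHG : PHG = ψB * (δ + ψG * α) / (2 * (δ * (ψG + ψB) + α * ψG * ψB)))
    (hPLG : PLG = ψB * δ / (2 * (δ * (ψG + ψB) + α * ψG * ψB)))
    (hPHB : PHB = ψG * δ / (2 * (δ * (ψG + ψB) + α * ψG * ψB)))
    (hPLB : PLB = ψG * (δ + ψB * α) / (2 * (δ * (ψG + ψB) + α * ψG * ψB))) :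
    PHG * δ = PLG * δ + PHB * ψB * α ∧
    PLG * (δ + ψG * α) = PHG * δ ∧
    PHB * (δ + ψB * α) = PLB * δ ∧
    PLB * δ = PHB * δ + PLG * ψG * α := by
  have hden : 2 * (δ * (ψG + ψB) + α * ψG * ψB) ≠ 0 := by positivity
  subst hPHG hPLG hPHB hPLB
  refine ⟨?_, ?_, ?_, ?_⟩ <;> field_simp <;> ring
end

section
/- The sign of u_G'(λ) equals the sign of h(ψ) = −(1−k)α²(u_H − p)ψ² + (u_H − u_L − 4(1−k)(u_H − p))δαψ − 2(1−k)δ²(u_H + u_L − 2p), evaluated at ψ = λ^k, for λ > 0, where k ∈ (0,1), δ, α > 0, u_H > p, and u_H > u_L. -/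
/-!
Write `ψ = x ^ k` and `D = C + ψ α`. Differentiating `x ^ (k - 1) * (A - B / D)` and pulling out the
positive factor `x ^ (k - 2) / D ^ 2` leaves `(k - 1) (A D - B) D + k α B ψ`, which for
`A = u_H - p`, `B = (u_H - u_L) δ`, `C = 2 δ` expands to the quadratic `h(ψ)`.
-/

open Real

theorem Real.sign_mul_of_pos {c : ℝ} (hc : 0 < c) (r : ℝ) : sign (c * r) = sign r := by
  rcases lt_trichotomy r 0 with hr | rfl | hr
  · rw [sign_of_neg hr, sign_of_neg (mul_neg_of_pos_of_neg hc hr)]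
  · rw [mul_zero]
  · rw [sign_of_pos hr, sign_of_pos (mul_pos hc hr)]

theorem hasDerivAt_rpow_sub_one_mul_sub_div {k A B C α x : ℝ} (hx : 0 < x)
    (hD : C + x ^ k * α ≠ 0) :
    HasDerivAt (fun y : ℝ => y ^ (k - 1) * (A - B / (C + y ^ k * α)))
      (x ^ (k - 2) / (C + x ^ k * α) ^ 2 *
        ((k - 1) * (A * (C + x ^ k * α) - B) * (C + x ^ k * α) + k * α * B * x ^ k)) x := by
  have hpow_sub_one : HasDerivAt (fun y : ℝ => y ^ (k - 1)) ((k - 1) * x ^ (k - 1 - 1)) x :=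
    hasDerivAt_rpow_const (Or.inl hx.ne')
  have hpow : HasDerivAt (fun y : ℝ => y ^ k) (k * x ^ (k - 1)) x :=
    hasDerivAt_rpow_const (Or.inl hx.ne')
  have hden : HasDerivAt (fun y : ℝ => C + y ^ k * α) (k * x ^ (k - 1) * α) x :=
    (hpow.mul_const α).const_add C
  refine (hpow_sub_one.mul (((hasDerivAt_const x B).div hden hD).const_sub A)).congr_deriv ?_
  simp only [Pi.div_apply]
  rw [show k - 1 - 1 = k - 2 by ring, rpow_sub hx, rpow_sub_one hx.ne', rpow_two]
  field_simp
  ring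

theorem uG_deriv_sign_general (k δ α uH uL p : ℝ)
    (hδ : 0 < δ) (hα : 0 < α) :
    ∀ lam : ℝ, 0 < lam →
      Real.sign
        (deriv (fun x : ℝ => x ^ (k - 1) * (uH - p - (uH - uL) * δ / (2 * δ + x ^ k * α))) lam)
      = Real.sign
        (-(1 - k) * α ^ 2 * (uH - p) * (lam ^ k) ^ 2
          + (uH - uL - 4 * (1 - k) * (uH - p)) * δ * α * lam ^ k
          - 2 * (1 - k) * δ ^ 2 * (uH + uL - 2 * p)) := by
  intro lam hlam
  have hD : 0 < 2 * δ + lam ^ k * α := by positivity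
  have hfactor : 0 < lam ^ (k - 2) / (2 * δ + lam ^ k * α) ^ 2 :=
    div_pos (rpow_pos_of_pos hlam _) (pow_pos hD 2)
  rw [(hasDerivAt_rpow_sub_one_mul_sub_div hlam hD.ne').deriv, Real.sign_mul_of_pos hfactor]
  congr 1
  ring

theorem uG_deriv_sign (k δ α uH uL p : ℝ)
    (hk : k ∈ Set.Ioo (0:ℝ) 1) (hδ : 0 < δ) (hα : 0 < α)
    (hHp : uH > p) (hu : uH > uL) :
    ∀ lam : ℝ, 0 < lam →
      Real.sign
        (deriv (fun x : ℝ => x ^ (k - 1) * (uH - p - (uH - uL) * δ / (2 * δ + x ^ k * α))) lam)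
      = Real.sign
        (-(1 - k) * α ^ 2 * (uH - p) * (lam ^ k) ^ 2
          + (uH - uL - 4 * (1 - k) * (uH - p)) * δ * α * lam ^ k
          - 2 * (1 - k) * δ ^ 2 * (uH + uL - 2 * p)) :=
  uG_deriv_sign_general k δ α uH uL p hδ hα
end

section
/- The maximum over ψ ∈ ℝ of the quadratic h(ψ) = −(1−k)α²(u_H−p)ψ² + (u_H−u_L−4(1−k)(u_H−p))δαψ − 2(1−k)δ²(u_H+u_L−2p) has the same sign as (1−k)² − (1−k) + (u_H−u_L)/(8(u_H−p)), assuming k ∈ (0,1), δ, α > 0, u_H > u_L, u_H > p, and (u_H+u_L)/2 > p. -/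
theorem quadratic_max_sign (k δ α uH uL p : ℝ)
    (hk : k ∈ Set.Ioo (0:ℝ) 1) (hδ : 0 < δ) (hα : 0 < α)
    (hu : uH > uL) (hHp : uH > p) (hgain : (uH + uL) / 2 > p) :
    ∃ M : ℝ,
      IsGreatest (Set.range (fun ψ : ℝ =>
        -(1 - k) * α ^ 2 * (uH - p) * ψ ^ 2
          + (uH - uL - 4 * (1 - k) * (uH - p)) * δ * α * ψ
          - 2 * (1 - k) * δ ^ 2 * (uH + uL - 2 * p))) M ∧
      Real.sign M = Real.sign ((1 - k) ^ 2 - (1 - k) + (uH - uL) / (8 * (uH - p))) := by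
  obtain ⟨hk0, hk1⟩ := hk
  have hkm : 0 < 1 - k := by linarith
  have hup : 0 < uH - p := by linarith
  have hA : 0 < (1 - k) * α ^ 2 * (uH - p) :=
    mul_pos (mul_pos hkm (by positivity)) hup
  have hAne : (1 - k) * α ^ 2 * (uH - p) ≠ 0 := ne_of_gt hA
  have hP : (0:ℝ) < 8 * α ^ 2 * δ ^ 2 * (uH - uL) * (uH - p) := by
    have h1 : 0 < uH - uL := by linarith
    positivity
  have hNS : 4 * ((1 - k) * α ^ 2 * (uH - p)) * (-2 * (1 - k) * δ ^ 2 * (uH + uL - 2 * p))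
      + ((uH - uL - 4 * (1 - k) * (uH - p)) * δ * α) ^ 2
      = 8 * α ^ 2 * δ ^ 2 * (uH - uL) * (uH - p)
        * ((1 - k) ^ 2 - (1 - k) + (uH - uL) / (8 * (uH - p))) := by
    field_simp
    ring
  refine ⟨(4 * ((1 - k) * α ^ 2 * (uH - p)) * (-2 * (1 - k) * δ ^ 2 * (uH + uL - 2 * p))
      + ((uH - uL - 4 * (1 - k) * (uH - p)) * δ * α) ^ 2)
      / (4 * ((1 - k) * α ^ 2 * (uH - p))), ⟨⟨((uH - uL - 4 * (1 - k) * (uH - p)) * δ * α)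
      / (2 * ((1 - k) * α ^ 2 * (uH - p))), ?_⟩, ?_⟩, ?_⟩
  · show -(1 - k) * α ^ 2 * (uH - p) * _ ^ 2 + _ * _ - _ = _
    field_simp
    ring
  · rintro x ⟨ψ, rfl⟩
    rw [le_div_iff₀ (by linarith : (0:ℝ) < 4 * ((1 - k) * α ^ 2 * (uH - p)))]
    beta_reduce
    nlinarith [sq_nonneg (2 * ((1 - k) * α ^ 2 * (uH - p)) * ψ
      - (uH - uL - 4 * (1 - k) * (uH - p)) * δ * α)]
  · rw [hNS]
    rcases lt_trichotomy ((1 - k) ^ 2 - (1 - k) + (uH - uL) / (8 * (uH - p))) 0 with hS | hS | hS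
    · have hNneg := mul_neg_of_pos_of_neg hP hS
      have : (8 * α ^ 2 * δ ^ 2 * (uH - uL) * (uH - p)
          * ((1 - k) ^ 2 - (1 - k) + (uH - uL) / (8 * (uH - p))))
          / (4 * ((1 - k) * α ^ 2 * (uH - p))) < 0 :=
        div_neg_of_neg_of_pos hNneg (by linarith)
      rw [Real.sign_of_neg this, Real.sign_of_neg hS]
    · rw [hS, mul_zero, zero_div, Real.sign_zero]
    · have hNpos := mul_pos hP hS
      have : 0 < (8 * α ^ 2 * δ ^ 2 * (uH - uL) * (uH - p)
          * ((1 - k) ^ 2 - (1 - k) + (uH - uL) / (8 * (uH - p))))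
          / (4 * ((1 - k) * α ^ 2 * (uH - p))) :=
        div_pos hNpos (by linarith)
      rw [Real.sign_of_pos this, Real.sign_of_pos hS]
end

section
/- Assume k ∈ (0,1), δ, α > 0, u_H > u_L ≥ 0, (u_H+u_L)/2 > p ≥ 0, and k > k̲ := (1 + √(1 − (u_H−u_L)/(2(u_H−p))))/2. Then there exist 0 < λ̲ < λ̄ such that u_G(λ) = λ^{k−1}·((u_H−p) − (u_H−u_L)δ/(2δ+λ^k α)) is strictly increasing on (λ̲, λ̄) and strictly decreasing on (0, λ̲) and on (λ̄, ∞). -/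
/-!
Write `A = u_H - p`, `B = u_H - u_L` and `ψ = λ^k`. Differentiating gives
`u_G'(λ) = λ^k / (λ² (2δ + ψα)²) · h(ψ)` with `h` a quadratic in `ψ` whose leading and constant
coefficients are negative, so `u_G` falls where `h < 0` and rises where `h > 0`. Its discriminant
is `α²δ²B(8Ak(k-1) + B)`, and `k > k̲` means `2k - 1 > √(1 - B/(2A))`, which gives both
`8Ak(k-1) + B > 0` and, with `k > 1/2`, a positive linear coefficient. Hence `h` has two
positive roots `ψ₁ < ψ₂`, and `λ̲ = ψ₁^(1/k)`, `λ̄ = ψ₂^(1/k)`.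
-/

open Real Set

theorem quadratic_eq_mul_sub_mul_sub {K : Type*} [Field K] [NeZero (2 : K)] {a b c s : K}
    (ha : a ≠ 0) (h : discrim a b c = s * s) (x : K) :
    a * (x * x) + b * x + c = a * (x - (-b + s) / (2 * a)) * (x - (-b - s) / (2 * a)) := by
  rw [discrim] at h
  field_simp
  linear_combination -h

theorem exists_pos_roots_of_neg_of_pos_of_neg {a b c : ℝ} (ha : a < 0) (hb : 0 < b) (hc : c < 0)
    (hd : 0 < discrim a b c) :
    ∃ r₁ r₂, 0 < r₁ ∧ r₁ < r₂ ∧ (∀ x, x < r₁ → a * (x * x) + b * x + c < 0) ∧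
      (∀ x ∈ Ioo r₁ r₂, 0 < a * (x * x) + b * x + c) ∧
      (∀ x, r₂ < x → a * (x * x) + b * x + c < 0) := by
  set s := √(discrim a b c)
  have hs : 0 < s := sqrt_pos.2 hd
  have hsb : s < b := by
    rw [sqrt_lt' hb, discrim]
    nlinarith [mul_pos_of_neg_of_neg ha hc]
  have hfactor := quadratic_eq_mul_sub_mul_sub ha.ne (mul_self_sqrt hd.le).symm
  refine ⟨(-b + s) / (2 * a), (-b - s) / (2 * a), div_pos_of_neg_of_neg (by linarith) (by linarith),
    div_lt_div_of_neg_of_lt (by linarith) (by linarith), fun x hx => ?_, fun x hx => ?_,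
    fun x hx => ?_⟩ <;> rw [hfactor]
  · have hx₂ : x < (-b - s) / (2 * a) :=
      hx.trans (div_lt_div_of_neg_of_lt (by linarith) (by linarith))
    exact mul_neg_of_pos_of_neg (mul_pos_of_neg_of_neg ha (sub_neg.2 hx)) (sub_neg.2 hx₂)
  · exact mul_pos_of_neg_of_neg (mul_neg_of_neg_of_pos ha (sub_pos.2 hx.1)) (sub_neg.2 hx.2)
  · have hx₁ : (-b + s) / (2 * a) < x :=
      (div_lt_div_of_neg_of_lt (by linarith) (by linarith)).trans hx
    exact mul_neg_of_neg_of_pos (mul_neg_of_neg_of_pos ha (sub_pos.2 hx₁)) (sub_pos.2 hx)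

noncomputable def kThreshold (A B : ℝ) : ℝ := (1 + √(1 - B / (2 * A))) / 2

theorem half_lt_of_kThreshold_lt {A B k : ℝ} (h : kThreshold A B < k) : 1 / 2 < k := by
  have := sqrt_nonneg (1 - B / (2 * A))
  rw [kThreshold] at h
  linarith

theorem discrim_factor_pos_of_kThreshold_lt {A B k : ℝ} (hA : 0 < A) (h : kThreshold A B < k) :
    0 < 8 * A * k * (k - 1) + B := by
  have hk := half_lt_of_kThreshold_lt h
  have hsqrt : √(1 - B / (2 * A)) < 2 * k - 1 := by rw [kThreshold] at h; linarith
  rw [sqrt_lt' (by linarith), sub_lt_comm, lt_div_iff₀ (by linarith)] at hsqrt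
  linarith

noncomputable def uG (k δ α A B lam : ℝ) : ℝ :=
  lam ^ (k - 1) * (A - B * δ / (2 * δ + lam ^ k * α))

def uGNumerator (k δ α A B ψ : ℝ) : ℝ :=
  (k - 1) * A * α ^ 2 * (ψ * ψ) + α * δ * (4 * A * (k - 1) + B) * ψ
    + 2 * δ ^ 2 * (k - 1) * (2 * A - B)

theorem hasDerivAt_uG {k δ α A B x : ℝ} (hx : 0 < x) (hQ : 2 * δ + x ^ k * α ≠ 0) :
    HasDerivAt (uG k δ α A B)
      (x ^ k / (x ^ 2 * (2 * δ + x ^ k * α) ^ 2) * uGNumerator k δ α A B (x ^ k)) x := by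
  have hpow (r : ℝ) : HasDerivAt (fun y : ℝ => y ^ r) (r * x ^ (r - 1)) x :=
    hasDerivAt_rpow_const (Or.inl hx.ne')
  have hQ' := ((hpow k).mul_const α).const_add (2 * δ)
  have hquot := ((hasDerivAt_const x (B * δ)).fun_div hQ' hQ).const_sub A
  refine ((hpow (k - 1)).mul hquot).congr_deriv ?_
  rw [rpow_sub hx, rpow_sub hx, rpow_one, uGNumerator]
  generalize x ^ k = y at hQ ⊢
  generalize hQdef : 2 * δ + y * α = Q at hQ ⊢
  field_simp
  subst hQdef
  ring

theorem exists_pos_hasDerivAt_uG {k δ α A B x : ℝ} (hδ : 0 < δ) (hα : 0 ≤ α) (hx : 0 < x) :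
    ∃ c > 0, HasDerivAt (uG k δ α A B) (c * uGNumerator k δ α A B (x ^ k)) x := by
  have hxk := rpow_pos_of_pos hx k
  exact ⟨_, by positivity, hasDerivAt_uG hx (by positivity)⟩

theorem strictMonoOn_uG {k δ α A B : ℝ} {S : Set ℝ} (hS : Convex ℝ S) (hS₀ : S ⊆ Ioi 0)
    (hδ : 0 < δ) (hα : 0 ≤ α) (h : ∀ x ∈ interior S, 0 < uGNumerator k δ α A B (x ^ k)) :
    StrictMonoOn (uG k δ α A B) S := by
  refine strictMonoOn_of_deriv_pos hS (fun x hx => ?_) fun x hx => ?_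
  · obtain ⟨_, _, hderiv⟩ := exists_pos_hasDerivAt_uG (A := A) (B := B) hδ hα (hS₀ hx)
    exact hderiv.continuousAt.continuousWithinAt
  · obtain ⟨c, hc, hderiv⟩ := exists_pos_hasDerivAt_uG hδ hα (hS₀ (interior_subset hx))
    rw [hderiv.deriv]
    exact mul_pos hc (h x hx)

theorem strictAntiOn_uG {k δ α A B : ℝ} {S : Set ℝ} (hS : Convex ℝ S) (hS₀ : S ⊆ Ioi 0)
    (hδ : 0 < δ) (hα : 0 ≤ α) (h : ∀ x ∈ interior S, uGNumerator k δ α A B (x ^ k) < 0) :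
    StrictAntiOn (uG k δ α A B) S := by
  refine strictAntiOn_of_deriv_neg hS (fun x hx => ?_) fun x hx => ?_
  · obtain ⟨_, _, hderiv⟩ := exists_pos_hasDerivAt_uG (A := A) (B := B) hδ hα (hS₀ hx)
    exact hderiv.continuousAt.continuousWithinAt
  · obtain ⟨c, hc, hderiv⟩ := exists_pos_hasDerivAt_uG hδ hα (hS₀ (interior_subset hx))
    rw [hderiv.deriv]
    exact mul_neg_of_pos_of_neg hc (h x hx)

theorem exists_pos_roots_uGNumerator {k δ α A B : ℝ} (hk : 1 / 2 < k) (hk₁ : k < 1) (hδ : 0 < δ)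
    (hα : 0 < α) (hA : 0 < A) (hB : 0 < B) (hBA : B < 2 * A) (hkey : 0 < 8 * A * k * (k - 1) + B) :
    ∃ ψ₁ ψ₂, 0 < ψ₁ ∧ ψ₁ < ψ₂ ∧ (∀ ψ, ψ < ψ₁ → uGNumerator k δ α A B ψ < 0) ∧
      (∀ ψ ∈ Ioo ψ₁ ψ₂, 0 < uGNumerator k δ α A B ψ) ∧
      (∀ ψ, ψ₂ < ψ → uGNumerator k δ α A B ψ < 0) := by
  have ha : (k - 1) * A * α ^ 2 < 0 :=
    mul_neg_of_neg_of_pos (mul_neg_of_neg_of_pos (by linarith) hA) (by positivity)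
  have hb : 0 < α * δ * (4 * A * (k - 1) + B) := by
    have : 0 < 4 * A * (k - 1) + B := by
      nlinarith [mul_pos (mul_pos hA (sub_pos.2 hk₁)) (sub_pos.2 hk)]
    positivity
  have hc : 2 * δ ^ 2 * (k - 1) * (2 * A - B) < 0 :=
    mul_neg_of_neg_of_pos (mul_neg_of_pos_of_neg (by positivity) (by linarith)) (by linarith)
  have hd : discrim ((k - 1) * A * α ^ 2) (α * δ * (4 * A * (k - 1) + B))
      (2 * δ ^ 2 * (k - 1) * (2 * A - B)) = α ^ 2 * δ ^ 2 * B * (8 * A * k * (k - 1) + B) := by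
    rw [discrim]; ring
  exact exists_pos_roots_of_neg_of_pos_of_neg ha hb hc (hd ▸ by positivity)

theorem uG_nonmonotone_general (k δ α uH uL p : ℝ)
    (hk : k ∈ Set.Ioo (0:ℝ) 1) (hδ : 0 < δ) (hα : 0 < α)
    (hu : uH > uL) (hgain : (uH + uL) / 2 > p)
    (hkbig : k > (1 + Real.sqrt (1 - (uH - uL) / (2 * (uH - p)))) / 2) :
    ∃ lam₁ lam₂ : ℝ, 0 < lam₁ ∧ lam₁ < lam₂ ∧
      StrictMonoOn (fun lam : ℝ => lam ^ (k - 1) * (uH - p - (uH - uL) * δ / (2 * δ + lam ^ k * α)))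
        (Set.Ioo lam₁ lam₂) ∧
      StrictAntiOn (fun lam : ℝ => lam ^ (k - 1) * (uH - p - (uH - uL) * δ / (2 * δ + lam ^ k * α)))
        (Set.Ioo 0 lam₁) ∧
      StrictAntiOn (fun lam : ℝ => lam ^ (k - 1) * (uH - p - (uH - uL) * δ / (2 * δ + lam ^ k * α)))
        (Set.Ioi lam₂) := by
  obtain ⟨hk₀, hk₁⟩ := hk
  have hA : 0 < uH - p := by linarith
  obtain ⟨ψ₁, ψ₂, hψ₁, hψ₁₂, hbelow, hbetween, habove⟩ := exists_pos_roots_uGNumerator (δ := δ)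
    (half_lt_of_kThreshold_lt hkbig) hk₁ hδ hα hA (by linarith) (by linarith)
    (discrim_factor_pos_of_kThreshold_lt hA hkbig)
  have hψ₂ : 0 < ψ₂ := hψ₁.trans hψ₁₂
  have hlam₁ : 0 < ψ₁ ^ k⁻¹ := by positivity
  have hlam₂ : 0 < ψ₂ ^ k⁻¹ := by positivity
  have hlt_inv {x ψ : ℝ} (hx : 0 < x) (hψ : 0 < ψ) : x < ψ ^ k⁻¹ ↔ x ^ k < ψ :=
    lt_rpow_inv_iff_of_pos hx.le hψ.le hk₀
  have hinv_lt {x ψ : ℝ} (hx : 0 < x) (hψ : 0 < ψ) : ψ ^ k⁻¹ < x ↔ ψ < x ^ k :=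
    rpow_inv_lt_iff_of_pos hψ.le hx.le hk₀
  refine ⟨ψ₁ ^ k⁻¹, ψ₂ ^ k⁻¹, hlam₁, by gcongr, ?_, ?_, ?_⟩
  · refine strictMonoOn_uG (convex_Ioo _ _) (fun x hx => hlam₁.trans hx.1) hδ hα.le
      fun x hx => ?_
    rw [interior_Ioo] at hx
    have hx₀ := hlam₁.trans hx.1
    exact hbetween _ ⟨(hinv_lt hx₀ hψ₁).1 hx.1, (hlt_inv hx₀ hψ₂).1 hx.2⟩
  · refine strictAntiOn_uG (convex_Ioo _ _) (fun x hx => hx.1) hδ hα.le fun x hx => ?_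
    rw [interior_Ioo] at hx
    exact hbelow _ ((hlt_inv hx.1 hψ₁).1 hx.2)
  · refine strictAntiOn_uG (convex_Ioi _) (fun x hx => hlam₂.trans hx) hδ hα.le fun x hx => ?_
    rw [interior_Ioi] at hx
    exact habove _ ((hinv_lt (hlam₂.trans hx) hψ₂).1 hx)

theorem uG_nonmonotone (k δ α uH uL p : ℝ)
    (hk : k ∈ Set.Ioo (0:ℝ) 1) (hδ : 0 < δ) (hα : 0 < α)
    (hu : uH > uL) (huL : uL ≥ 0) (hp : p ≥ 0) (hgain : (uH + uL) / 2 > p)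
    (hkbig : k > (1 + Real.sqrt (1 - (uH - uL) / (2 * (uH - p)))) / 2) :
    ∃ lam₁ lam₂ : ℝ, 0 < lam₁ ∧ lam₁ < lam₂ ∧
      StrictMonoOn (fun lam : ℝ => lam ^ (k - 1) * (uH - p - (uH - uL) * δ / (2 * δ + lam ^ k * α)))
        (Set.Ioo lam₁ lam₂) ∧
      StrictAntiOn (fun lam : ℝ => lam ^ (k - 1) * (uH - p - (uH - uL) * δ / (2 * δ + lam ^ k * α)))
        (Set.Ioo 0 lam₁) ∧
      StrictAntiOn (fun lam : ℝ => lam ^ (k - 1) * (uH - p - (uH - uL) * δ / (2 * δ + lam ^ k * α)))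
        (Set.Ioi lam₂) :=
  uG_nonmonotone_general k δ α uH uL p hk hδ hα hu hgain hkbig
end

section
/- Let Θ(λ_G, λ_B) = λ_G ψ_B(2δ+αψ_G)/(2(δψ_G+δψ_B+αψ_Gψ_B)) + λ_B ψ_G(2δ+αψ_B)/(2(δψ_G+δψ_B+αψ_Gψ_B)) where ψ_j = λ_j^k, k ∈ (0,1), δ, α > 0. Then Θ is continuous and strictly increasing in each of λ_G and λ_B on (0,∞)². -/
/-!
Fix `λ_B = b` and write `s = λ_G ^ k`, `β = b ^ k`. Since `λ_G = λ_G ^ (1 - k) * s`,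
`Θ = β/2 · λ_G ^ (1 - k) · (2δ + α s) · g s + b (2δ + α β)/2 · g s`
with `g s = s / ((δ + α β) s + δ β)`.
All factors are positive, `λ_G ^ (1 - k)` and `2δ + α s` are monotone, and `g` is a strictly
increasing Möbius map, so `Θ` is strictly increasing in `λ_G`; by symmetry also in `λ_B`.
-/

open Set Real

noncomputable def theta (k δ α x y : ℝ) : ℝ :=
  x * y ^ k * (2 * δ + α * x ^ k) / (2 * (δ * x ^ k + δ * y ^ k + α * x ^ k * y ^ k)) +
    y * x ^ k * (2 * δ + α * y ^ k) / (2 * (δ * x ^ k + δ * y ^ k + α * x ^ k * y ^ k))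

theorem theta_comm (k δ α x y : ℝ) : theta k δ α x y = theta k δ α y x := by
  unfold theta; ring

theorem div_mul_add_lt_div_mul_add {c d s u : ℝ} (hc : 0 ≤ c) (hd : 0 < d) (hs : 0 ≤ s)
    (hsu : s < u) : s / (c * s + d) < u / (c * u + d) := by
  rw [div_lt_div_iff₀ (by positivity) (by nlinarith)]
  nlinarith

theorem theta_eq_rpow_one_sub_mul {k δ α x b : ℝ} (hδ : 0 < δ) (hα : 0 ≤ α) (hx : 0 < x)
    (hb : 0 < b) :
    theta k δ α x b = b ^ k / 2 * x ^ (1 - k) * (2 * δ + α * x ^ k) *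
        (x ^ k / ((δ + α * b ^ k) * x ^ k + δ * b ^ k)) +
      b * (2 * δ + α * b ^ k) / 2 * (x ^ k / ((δ + α * b ^ k) * x ^ k + δ * b ^ k)) := by
  have hsplit : x = x ^ (1 - k) * x ^ k := by rw [← rpow_add hx]; simp
  have hs := rpow_pos_of_pos hx k
  have hβ := rpow_pos_of_pos hb k
  unfold theta
  nth_rw 1 [hsplit]
  field_simp
  ring

theorem strictMonoOn_theta_left {k δ α b : ℝ} (hk₀ : 0 < k) (hk₁ : k ≤ 1) (hδ : 0 < δ)
    (hα : 0 ≤ α) (hb : 0 < b) : StrictMonoOn (fun x => theta k δ α x b) (Ioi 0) := by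
  rintro x (hx : 0 < x) y (hy : 0 < y) hxy
  have hs := rpow_pos_of_pos hx k
  have hβ := rpow_pos_of_pos hb k
  have hr : x ^ (1 - k) ≤ y ^ (1 - k) := rpow_le_rpow hx.le hxy.le (by linarith)
  have hsu : x ^ k < y ^ k := rpow_lt_rpow hx.le hxy hk₀
  have hg := div_mul_add_lt_div_mul_add (c := δ + α * b ^ k) (by positivity)
    (by positivity : 0 < δ * b ^ k) hs.le hsu
  simp only [theta_eq_rpow_one_sub_mul hδ hα hx hb, theta_eq_rpow_one_sub_mul hδ hα hy hb]
  apply add_lt_add_of_le_of_lt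
  · gcongr
  · gcongr

theorem continuousOn_theta {k δ α : ℝ} (hk : 0 ≤ k) (hδ : 0 < δ) (hα : 0 ≤ α) :
    ContinuousOn (fun q : ℝ × ℝ => theta k δ α q.1 q.2) (Ioi 0 ×ˢ Ioi 0) := by
  have hpow : Continuous (fun x : ℝ => x ^ k) := continuous_rpow_const hk
  have hden : ∀ q ∈ Ioi (0 : ℝ) ×ˢ Ioi (0 : ℝ),
      2 * (δ * q.1 ^ k + δ * q.2 ^ k + α * q.1 ^ k * q.2 ^ k) ≠ 0 := by
    rintro ⟨x, y⟩ ⟨hx, hy⟩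
    have := rpow_pos_of_pos hx k
    have := rpow_pos_of_pos hy k
    positivity
  unfold theta
  refine .add (.div ?_ ?_ hden) (.div ?_ ?_ hden) <;> exact Continuous.continuousOn (by fun_prop)

theorem Theta_continuous_monotone (k δ α : ℝ)
    (hk : k ∈ Set.Ioo (0:ℝ) 1) (hδ : 0 < δ) (hα : 0 < α) :
    ContinuousOn
      (fun q : ℝ × ℝ =>
        q.1 * q.2 ^ k * (2 * δ + α * q.1 ^ k) /
            (2 * (δ * q.1 ^ k + δ * q.2 ^ k + α * q.1 ^ k * q.2 ^ k)) +
          q.2 * q.1 ^ k * (2 * δ + α * q.2 ^ k) /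
            (2 * (δ * q.1 ^ k + δ * q.2 ^ k + α * q.1 ^ k * q.2 ^ k)))
      (Set.Ioi 0 ×ˢ Set.Ioi 0) ∧
    (∀ lamB ∈ Set.Ioi (0:ℝ),
      StrictMonoOn
        (fun lamG : ℝ =>
          lamG * lamB ^ k * (2 * δ + α * lamG ^ k) /
              (2 * (δ * lamG ^ k + δ * lamB ^ k + α * lamG ^ k * lamB ^ k)) +
            lamB * lamG ^ k * (2 * δ + α * lamB ^ k) /
              (2 * (δ * lamG ^ k + δ * lamB ^ k + α * lamG ^ k * lamB ^ k)))
        (Set.Ioi 0)) ∧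
    (∀ lamG ∈ Set.Ioi (0:ℝ),
      StrictMonoOn
        (fun lamB : ℝ =>
          lamG * lamB ^ k * (2 * δ + α * lamG ^ k) /
              (2 * (δ * lamG ^ k + δ * lamB ^ k + α * lamG ^ k * lamB ^ k)) +
            lamB * lamG ^ k * (2 * δ + α * lamB ^ k) /
              (2 * (δ * lamG ^ k + δ * lamB ^ k + α * lamG ^ k * lamB ^ k)))
        (Set.Ioi 0)) := by
  obtain ⟨hk₀, hk₁⟩ := hk
  refine ⟨continuousOn_theta hk₀.le hδ hα.le, fun b hb => ?_, fun a ha => ?_⟩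
  · exact strictMonoOn_theta_left hk₀ hk₁.le hδ hα.le hb
  · change StrictMonoOn (theta k δ α a) (Ioi 0)
    rw [show theta k δ α a = (theta k δ α · a) from funext (theta_comm k δ α a)]
    exact strictMonoOn_theta_left hk₀ hk₁.le hδ hα.le ha
end
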